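/- Let f : ℝⁿ → ℝ and g : ℝᵐ → ℝⁿ be twice differentiable, ψ = f ∘ g. Define the hyper-dual extension of a twice differentiable map h at input ⟨x, δx₁, δx₂, δδx⟩ as ⟨h(x), Dh(x)·δx₁, Dh(x)·δx₂, δx₁ᵀ·∇²h(x)·δx₂ + Dh(x)·δδx⟩ (applied componentwise for vector-valued h). Then the hyper-dual extension of ψ equals the composition of the hyper-dual extensions of f and g: applying g's extension to ⟨x, δx₁, δx₂, δδx⟩ and then f's extension yields ⟨ψ(x), Dψ(x)·δx₁, Dψ(x)·δx₂, δx₁ᵀ·∇²ψ(x)·δx₂ + Dψ(x)·δδx⟩. -/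

import Mathlib

/-- The hyper-dual extension of a map `h`: it sends ⟨x, δx₁, δx₂, δδx⟩ to
⟨h(x), Dh(x)δx₁, Dh(x)δx₂, δx₁ᵀ∇²h(x)δx₂ + Dh(x)δδx⟩ (componentwise for vector-valued h). -/
noncomputable def hyperExt {E F : Type*} [NormedAddCommGroup E] [NormedSpace ℝ E]
    [NormedAddCommGroup F] [NormedSpace ℝ F] (h : E → F)
    (p : E × E × E × E) : F × F × F × F :=
  (h p.1, fderiv ℝ h p.1 p.2.1, fderiv ℝ h p.1 p.2.2.1,
    fderiv ℝ (fderiv ℝ h) p.1 p.2.1 p.2.2.1 + fderiv ℝ h p.1 p.2.2.2)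

/-!
The first three components are the chain rule. For the fourth, differentiate
`D(f ∘ g) = Df(g ·) ∘ Dg` by the product rule for composition of linear maps:
`D²(f ∘ g)(x)(v, w) = D²f(g x)(Dg v, Dg w) + Df(g x)(D²g(x)(v, w))`, and the
`Df(g x)(Dg δδx)` term of the composite extension supplies `D(f ∘ g)(x) δδx`.
-/

section SecondOrderChainRule

variable {𝕜 E F G : Type*} [NontriviallyNormedField 𝕜]
  [NormedAddCommGroup E] [NormedSpace 𝕜 E] [NormedAddCommGroup F] [NormedSpace 𝕜 F]
  [NormedAddCommGroup G] [NormedSpace 𝕜 G] {f : F → G} {g : E → F}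

theorem fderiv_comp_eq (hf : Differentiable 𝕜 f) (hg : Differentiable 𝕜 g) :
    fderiv 𝕜 (f ∘ g) = fun y ↦ (fderiv 𝕜 f (g y)).comp (fderiv 𝕜 g y) :=
  funext fun y ↦ fderiv_comp y (hf (g y)) (hg y)

theorem fderiv_fderiv_comp_apply (hf : Differentiable 𝕜 f) (hg : Differentiable 𝕜 g) {x : E}
    (hf' : DifferentiableAt 𝕜 (fderiv 𝕜 f) (g x)) (hg' : DifferentiableAt 𝕜 (fderiv 𝕜 g) x)
    (v w : E) :
    fderiv 𝕜 (fderiv 𝕜 (f ∘ g)) x v w =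
      fderiv 𝕜 (fderiv 𝕜 f) (g x) (fderiv 𝕜 g x v) (fderiv 𝕜 g x w) +
        fderiv 𝕜 f (g x) (fderiv 𝕜 (fderiv 𝕜 g) x v w) := by
  have hfg' : DifferentiableAt 𝕜 (fun y ↦ fderiv 𝕜 f (g y)) x := hf'.comp x (hg x)
  rw [fderiv_comp_eq hf hg, fderiv_clm_comp hfg' hg', fderiv_fun_comp x hf' (hg x)]
  simp only [add_apply, ContinuousLinearMap.coe_comp, Function.comp_apply,
    ContinuousLinearMap.compL_apply, ContinuousLinearMap.flip_apply]
  exact add_comm _ _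

end SecondOrderChainRule

/-- the hyper-dual extension of ψ = f ∘ g equals the composition of the
hyper-dual extensions of f and g. -/
theorem hyperExt_comp (m n : ℕ) (f : (Fin n → ℝ) → ℝ)
    (g : (Fin m → ℝ) → (Fin n → ℝ))
    (hf : ContDiff ℝ 2 f) (hg : ContDiff ℝ 2 g)
    (x δx₁ δx₂ δδx : Fin m → ℝ) :
    hyperExt f (hyperExt g (x, δx₁, δx₂, δδx)) = hyperExt (f ∘ g) (x, δx₁, δx₂, δδx) := by
  have hfd : Differentiable ℝ f := hf.differentiable two_ne_zero
  have hgd : Differentiable ℝ g := hg.differentiable two_ne_zero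
  have hf' : Differentiable ℝ (fderiv ℝ f) :=
    (hf.fderiv_right one_add_one_eq_two.le).differentiable one_ne_zero
  have hg' : Differentiable ℝ (fderiv ℝ g) :=
    (hg.fderiv_right one_add_one_eq_two.le).differentiable one_ne_zero
  simp only [hyperExt]
  rw [fderiv_fderiv_comp_apply hfd hgd (hf' (g x)) (hg' x), fderiv_comp_eq hfd hgd]
  simp only [ContinuousLinearMap.coe_comp, Function.comp_apply, map_add, add_assoc]
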